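/- arXiv:1708.01960 — 3 statements merged into one kernel-verified Lean document; each statement's English description precedes it below -/
import Mathlib

section
/- Let T be a compact, self-adjoint, positive semidefinite operator on a Hilbert space with eigenvalues (τ_i) and orthonormal eigenbasis (ψ_i), let λ > 0 and 0 < r ≤ 1/2, and let P_λ be the orthogonal projection onto span{ψ_i : τ_i ≥ λ}. If f = T^r u, then the truncated element f_λ = P_λ f satisfies ‖T^{-1/2} f_λ‖ ≤ λ^{r − 1/2} ‖u‖, i.e. f_λ lies in the range of T^{1/2} and its preimage under T^{1/2} has norm at most λ^{r−1/2}‖u‖. -/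
open scoped RealInnerProductSpace ENNReal

/-- Let `T` be a compact self-adjoint positive semidefinite operator on a separable Hilbert
space, given through its spectral decomposition by an orthonormal eigenbasis `ψ` and
eigenvalues `τ i ≥ 0`, let `λ > 0` and `0 < r ≤ 1/2`.  If `f = T^r u` (coefficientwise
`⟪f, ψ i⟫ = τᵢ^r ⟪u, ψ i⟫`) and `fλ = P_λ f` is the truncation of `f` to eigenvalues `≥ λ`,
then `fλ` lies in the range of `T^{1/2}`, and its preimage `g` under `T^{1/2}` (the unique one
lying in the closure of the range of `T`, i.e. orthogonal to the kernel) satisfies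
`‖g‖ = ‖T^{-1/2} fλ‖ ≤ λ^{r - 1/2} ‖u‖`. -/
theorem stmt_5 {H : Type*} [NormedAddCommGroup H] [InnerProductSpace ℝ H] [CompleteSpace H]
    (ψ : HilbertBasis ℕ ℝ H) (τ : ℕ → ℝ) (hτ : ∀ i, 0 ≤ τ i)
    (r lam : ℝ) (hr : 0 < r) (hr' : r ≤ 1 / 2) (hlam : 0 < lam) (f u flam : H)
    (hf : ∀ i, ⟪f, ψ i⟫ = τ i ^ r * ⟪u, ψ i⟫)
    (hflam : ∀ i, ⟪flam, ψ i⟫ = if lam ≤ τ i then ⟪f, ψ i⟫ else 0) :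
    ∃ g : H, (∀ i, Real.sqrt (τ i) * ⟪g, ψ i⟫ = ⟪flam, ψ i⟫) ∧
      (∀ i, τ i = 0 → ⟪g, ψ i⟫ = 0) ∧
      ‖g‖ ≤ lam ^ (r - 1 / 2) * ‖u‖ := by
  classical
  set C : ℝ := lam ^ (r - 1 / 2) with hC
  have hC0 : 0 ≤ C := Real.rpow_nonneg hlam.le _
  set U : lp (fun _ : ℕ => ℝ) 2 := ψ.repr u with hU
  set a : ℕ → ℝ := fun i => if lam ≤ τ i then τ i ^ (r - 1 / 2) * U i else 0 with ha
  -- the pointwise bound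
  have hbound : ∀ i, ‖a i‖ ≤ C * ‖U i‖ := by
    intro i
    simp only [ha]
    split_ifs with h
    · rw [norm_mul, Real.norm_eq_abs, abs_of_nonneg (Real.rpow_nonneg (hτ i) _)]
      exact mul_le_mul_of_nonneg_right
        (Real.rpow_le_rpow_of_nonpos hlam h (by linarith)) (norm_nonneg _)
    · simpa using mul_nonneg hC0 (norm_nonneg (U i))
  have hmem : Memℓp a 2 := by
    apply memℓp_gen
    have hs : Summable fun i => C ^ (2 : ℝ≥0∞).toReal * ‖U i‖ ^ (2 : ℝ≥0∞).toReal :=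
      ((lp.memℓp U).summable (by norm_num)).mul_left _
    refine Summable.of_nonneg_of_le (fun i => ?_) (fun i => ?_) hs
    · positivity
    · rw [← Real.mul_rpow hC0 (norm_nonneg _)]
      exact Real.rpow_le_rpow (norm_nonneg _) (hbound i) ENNReal.toReal_nonneg
  set G : lp (fun _ : ℕ => ℝ) 2 := ⟨a, hmem⟩ with hG
  refine ⟨ψ.repr.symm G, ?_, ?_, ?_⟩
  · intro i
    have hcoeff : ⟪ψ.repr.symm G, ψ i⟫ = a i := by
      rw [real_inner_comm, ← ψ.repr_apply_apply]
      simp only [hG, LinearIsometryEquiv.apply_symm_apply]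
    rw [hcoeff, hflam i, hf i]
    simp only [ha]
    split_ifs with h
    · have hτi : 0 < τ i := lt_of_lt_of_le hlam h
      have hUi : U i = ⟪u, ψ i⟫ := by
        rw [hU, ψ.repr_apply_apply, real_inner_comm]
      rw [hUi, ← mul_assoc, Real.sqrt_eq_rpow, ← Real.rpow_add hτi]
      norm_num
    · simp
  · intro i hτi
    have hcoeff : ⟪ψ.repr.symm G, ψ i⟫ = a i := by
      rw [real_inner_comm, ← ψ.repr_apply_apply]
      simp only [hG, LinearIsometryEquiv.apply_symm_apply]
    rw [hcoeff]
    simp only [ha]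
    rw [if_neg (by rw [hτi]; exact not_le.2 hlam)]
  · have hng : ‖ψ.repr.symm G‖ = ‖G‖ := by
      rw [LinearIsometryEquiv.norm_map]
    rw [hng]
    have hnu : ‖u‖ = ‖U‖ := by rw [hU, LinearIsometryEquiv.norm_map]
    rw [hnu]
    have hp : 0 < (2 : ℝ≥0∞).toReal := by norm_num
    refine lp.norm_le_of_tsum_le hp (mul_nonneg hC0 (norm_nonneg _)) ?_
    have hUnorm : ‖U‖ ^ (2 : ℝ≥0∞).toReal = ∑' i, ‖U i‖ ^ (2 : ℝ≥0∞).toReal :=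
      lp.norm_rpow_eq_tsum hp U
    have h1 : ∑' i, ‖G i‖ ^ (2 : ℝ≥0∞).toReal ≤ ∑' i, C ^ (2 : ℝ≥0∞).toReal * ‖U i‖ ^ (2 : ℝ≥0∞).toReal := by
      refine Summable.tsum_le_tsum (fun i => ?_) ((lp.memℓp G).summable hp)
        (((lp.memℓp U).summable hp).mul_left _)
      have hGi : G i = a i := rfl
      rw [hGi, ← Real.mul_rpow hC0 (norm_nonneg _)]
      exact Real.rpow_le_rpow (norm_nonneg _) (hbound i) hp.le
    calc ∑' i, ‖G i‖ ^ (2 : ℝ≥0∞).toReal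
        ≤ ∑' i, C ^ (2 : ℝ≥0∞).toReal * ‖U i‖ ^ (2 : ℝ≥0∞).toReal := h1
      _ = C ^ (2 : ℝ≥0∞).toReal * ∑' i, ‖U i‖ ^ (2 : ℝ≥0∞).toReal := tsum_mul_left
      _ = (C * ‖U‖) ^ (2 : ℝ≥0∞).toReal := by
          rw [Real.mul_rpow hC0 (norm_nonneg _), hUnorm]
end

section
/- Let S, T be bounded self-adjoint positive semidefinite operators on a Hilbert space and λ > 0. If ‖(λI + T)^{-1/2}(T − S)‖ ≤ B for some B > 0, then ‖(λI + T)(λI + S)^{-1}‖ ≤ (B/√λ + 1)². -/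
/-!
With `d = b - a`, `a = λ + S`, `b = λ + T` and `M = b^{-1/2} d`, the identity
`b a⁻¹ = d b⁻¹ d a⁻¹ + d b⁻¹ + 1` holds in any ring, and `d b⁻¹ d = M⋆ M`, `d b⁻¹ = (b^{-1/2} M)⋆`.
The C⋆-identity and the spectral bounds `‖a⁻¹‖ ≤ λ⁻¹`, `‖b^{-1/2}‖ ≤ λ^{-1/2}` then give
`‖b a⁻¹‖ ≤ ‖M‖² / λ + ‖M‖ / √λ + 1 ≤ (‖M‖ / √λ + 1)²`.
-/

open scoped NNReal

theorem mul_eq_sub_mul_sub_add_sub_add_one {R : Type*} [Ring R] {a a' b b' : R}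
    (ha : a * a' = 1) (hb : b' * b = 1) : b * a' = (b - a) * b' * (b - a) * a' + (b - a) * b' + 1 := by
  have hb_expand : b = (b - a) * b' * (b - a) + (b - a) * b' * a + a := by
    calc b = (b - a) * (b' * b) + a := by rw [hb]; noncomm_ring
      _ = _ := by noncomm_ring
  calc b * a' = ((b - a) * b' * (b - a) + (b - a) * b' * a + a) * a' := by rw [← hb_expand]
    _ = (b - a) * b' * (b - a) * a' + (b - a) * b' * (a * a') + a * a' := by noncomm_ring
    _ = _ := by rw [ha, mul_one]

theorem CStarRing.norm_one_le {E : Type*} [NormedRing E] [StarRing E] [CStarRing E] :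
    ‖(1 : E)‖ ≤ 1 := by
  rcases subsingleton_or_nontrivial E with _ | _
  · simp [Subsingleton.elim (1 : E) 0]
  · exact (CStarRing.norm_one (E := E)).le

section CStarAlgebra

variable {A : Type*} [CStarAlgebra A] [PartialOrder A] [StarOrderedRing A]

theorem le_of_mem_spectrum_of_algebraMap_le {a : A} {r : ℝ≥0} (ha : algebraMap ℝ≥0 A r ≤ a)
    {x : ℝ≥0} (hx : x ∈ spectrum ℝ≥0 a) : r ≤ x := by
  have ha₀ : 0 ≤ a := (algebraMap_nonneg A r.2).trans ha
  refine (cfc_nnreal_le_iff (fun _ => r) id a (SpectrumRestricts.nnreal_of_nonneg ha₀)).mp ?_ x hx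
  rwa [cfc_const r a, cfc_id ℝ≥0 a]

theorem norm_rpow_le_of_algebraMap_le {a : A} {r : ℝ≥0} (hr : 0 < r)
    (ha : algebraMap ℝ≥0 A r ≤ a) {y : ℝ} (hy : y ≤ 0) : ‖a ^ y‖ ≤ (r : ℝ) ^ y := by
  have : ‖a ^ y‖₊ ≤ r ^ y := nnnorm_cfc_nnreal_le fun _ hx =>
    NNReal.rpow_le_rpow_of_nonpos hr (le_of_mem_spectrum_of_algebraMap_le ha hx) hy
  exact_mod_cast this

theorem norm_mul_rpow_neg_one_le {a b : A} {r : ℝ≥0} (hr : 0 < r)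
    (ha : algebraMap ℝ≥0 A r ≤ a) (hb : algebraMap ℝ≥0 A r ≤ b) :
    ‖b * a ^ (-1 : ℝ)‖ ≤ (‖b ^ (-(1 / 2) : ℝ) * (b - a)‖ / √r + 1) ^ 2 := by
  have ha_pos : IsStrictlyPositive a := (isStrictlyPositive_algebraMap hr).of_le ha
  have hb_pos : IsStrictlyPositive b := (isStrictlyPositive_algebraMap hr).of_le hb
  set h := b ^ (-(1 / 2) : ℝ)
  set M := h * (b - a) with hM
  have hh_sq : h * h = b ^ (-1 : ℝ) := by
    rw [← CFC.rpow_add hb_pos.isUnit]; norm_num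
  have hh : IsSelfAdjoint h := CFC.rpow_nonneg.isSelfAdjoint
  have hd : IsSelfAdjoint (b - a) := hb_pos.nonneg.isSelfAdjoint.sub ha_pos.nonneg.isSelfAdjoint
  have h_quad : (b - a) * b ^ (-1 : ℝ) * (b - a) = star M * M := by
    rw [hM, star_mul, hd.star_eq, hh.star_eq, ← hh_sq]; noncomm_ring
  have h_lin : (b - a) * b ^ (-1 : ℝ) = star (h * M) := by
    rw [hM, star_mul, star_mul, hd.star_eq, hh.star_eq, ← hh_sq]; noncomm_ring
  have ha_inv : a * a ^ (-1 : ℝ) = 1 := by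
    simpa [CFC.rpow_one a] using CFC.rpow_mul_rpow_neg 1 ha_pos
  have hb_inv : b ^ (-1 : ℝ) * b = 1 := by
    simpa [CFC.rpow_one b] using CFC.rpow_neg_mul_rpow 1 hb_pos
  have ha_inv_norm : ‖a ^ (-1 : ℝ)‖ ≤ (√r)⁻¹ ^ 2 := by
    rw [inv_pow, Real.sq_sqrt r.coe_nonneg, ← Real.rpow_neg_one]
    exact norm_rpow_le_of_algebraMap_le hr ha (by norm_num)
  have hh_norm : ‖h‖ ≤ (√r)⁻¹ := by
    rw [Real.sqrt_eq_rpow, ← Real.rpow_neg r.coe_nonneg]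
    exact norm_rpow_le_of_algebraMap_le hr hb (by norm_num)
  calc ‖b * a ^ (-1 : ℝ)‖
      = ‖star M * M * a ^ (-1 : ℝ) + star (h * M) + 1‖ := by
        rw [mul_eq_sub_mul_sub_add_sub_add_one ha_inv hb_inv, h_quad, h_lin]
    _ ≤ ‖M‖ ^ 2 * ‖a ^ (-1 : ℝ)‖ + ‖h‖ * ‖M‖ + 1 := by
        have h_quad_norm : ‖star M * M * a ^ (-1 : ℝ)‖ ≤ ‖M‖ ^ 2 * ‖a ^ (-1 : ℝ)‖ := by
          rw [sq, ← CStarRing.norm_star_mul_self]; exact norm_mul_le _ _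
        have h_lin_norm : ‖star (h * M)‖ ≤ ‖h‖ * ‖M‖ := by rw [norm_star]; exact norm_mul_le _ _
        linarith [norm_add₃_le (a := star M * M * a ^ (-1 : ℝ)) (b := star (h * M)) (c := 1),
          CStarRing.norm_one_le (E := A)]
    _ ≤ ‖M‖ ^ 2 * (√r)⁻¹ ^ 2 + (√r)⁻¹ * ‖M‖ + 1 := by gcongr
    _ ≤ (‖M‖ / √r + 1) ^ 2 := by
        rw [div_eq_mul_inv]
        nlinarith [norm_nonneg M, inv_nonneg.2 (Real.sqrt_nonneg r)]

end CStarAlgebra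

theorem stmt_12_general {H : Type*} [NormedAddCommGroup H] [InnerProductSpace ℂ H] [CompleteSpace H]
    (S T : H →L[ℂ] H) (hS : 0 ≤ S) (hT : 0 ≤ T) (lam : ℝ) (hlam : 0 < lam)
    (B : ℝ)
    (h : ‖CFC.rpow ((lam : ℂ) • (1 : H →L[ℂ] H) + T) (-(1 / 2)) * (T - S)‖ ≤ B) :
    ‖((lam : ℂ) • (1 : H →L[ℂ] H) + T) *
        CFC.rpow ((lam : ℂ) • (1 : H →L[ℂ] H) + S) (-1)‖ ≤
      (B / Real.sqrt lam + 1) ^ 2 := by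
  have hr : (lam.toNNReal : ℝ) = lam := Real.coe_toNNReal lam hlam.le
  have h_scalar : (lam : ℂ) • (1 : H →L[ℂ] H) = algebraMap ℝ≥0 (H →L[ℂ] H) lam.toNNReal := by
    rw [Algebra.algebraMap_eq_smul_one, NNReal.smul_def, hr, Complex.coe_smul]
  rw [h_scalar, ← add_sub_add_left_eq_sub T S (algebraMap ℝ≥0 _ lam.toNNReal)] at h
  rw [h_scalar]
  refine (norm_mul_rpow_neg_one_le (Real.toNNReal_pos.2 hlam)
    (le_add_of_nonneg_right hS) (le_add_of_nonneg_right hT)).trans ?_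
  rw [hr]
  gcongr
  exact h

/-- Let `S`, `T` be bounded self-adjoint positive semidefinite operators on a Hilbert space and
`λ > 0`.  If `‖(λI + T)^{-1/2}(T - S)‖ ≤ B` for some `B > 0`, then
`‖(λI + T)(λI + S)⁻¹‖ ≤ (B/√λ + 1)²`. -/
theorem stmt_12 {H : Type*} [NormedAddCommGroup H] [InnerProductSpace ℂ H] [CompleteSpace H]
    (S T : H →L[ℂ] H) (hS : 0 ≤ S) (hT : 0 ≤ T) (lam : ℝ) (hlam : 0 < lam)
    (B : ℝ) (hB : 0 < B)
    (h : ‖CFC.rpow ((lam : ℂ) • (1 : H →L[ℂ] H) + T) (-(1 / 2)) * (T - S)‖ ≤ B) :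
    ‖((lam : ℂ) • (1 : H →L[ℂ] H) + T) *
        CFC.rpow ((lam : ℂ) • (1 : H →L[ℂ] H) + S) (-1)‖ ≤
      (B / Real.sqrt lam + 1) ^ 2 :=
  stmt_12_general S T hS hT lam hlam B h
end

section
/- Let T be a bounded self-adjoint positive semidefinite operator on a Hilbert space with ‖T‖ ≤ κ², λ > 0, and suppose S is another bounded self-adjoint positive semidefinite operator with ‖(λI+T)^{-1/2}(T − S)‖ ≤ Ξ and ‖(λI+T)(λI+S)^{-1}‖ ≤ Ω. Then for 3/2 ≤ r ≤ 2, ‖(λI + S)^{-3/2} T^{r−1/2}‖ ≤ λ^{-1} Ω Ξ κ^{2r−3} + λ^{r−2} Ω^{1/2}. -/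
/-! Write `A = λ + T`, `B = λ + S`. Since `A - B = T - S`,
`B^{-3/2} = B^{-3/2} (T - S) A^{-1} + B^{-1/2} A^{-1}`, hence
`B^{-3/2} T^{r-1/2} = B^{-1/2} (B^{-1} A) A^{-1/2} (A^{-1/2} (T - S)) (A^{-1} T^{r-1/2})
  + (B^{-1/2} A^{1/2}) (A^{-3/2} T^{r-1/2})`.
The factors `B^{-1/2}`, `A^{-1/2}`, `A^{-1} T^{r-1/2}`, `A^{-3/2} T^{r-1/2}` are bounded through the
functional calculus of `S` and `T`; `‖B^{-1} A‖ = Ω` by taking adjoints; and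
`‖B^{-1/2} A^{1/2}‖² = ‖B^{-1/2} A B^{-1/2}‖` is the spectral radius of `A B^{-1}`, so it is at
most `Ω`. -/

open scoped NNReal ENNReal

lemma spectralRadius_mul_comm {𝕜 B : Type*} [NormedField 𝕜] [Ring B] [Algebra 𝕜 B] (a b : B) :
    spectralRadius 𝕜 (a * b) = spectralRadius 𝕜 (b * a) := by
  suffices key : ∀ x y : B, spectralRadius 𝕜 (x * y) ≤ spectralRadius 𝕜 (y * x) from
    (key a b).antisymm (key b a)
  intro x y
  refine iSup₂_le fun k hk => ?_
  rcases eq_or_ne k 0 with rfl | hk0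
  · simp
  · have hk' : k ∈ spectrum 𝕜 (y * x) \ {0} :=
      spectrum.nonzero_mul_comm (𝕜 := 𝕜) x y ▸ ⟨hk, hk0⟩
    exact le_iSup₂ (f := fun k (_ : k ∈ spectrum 𝕜 (y * x)) => (‖k‖₊ : ℝ≥0∞)) k hk'.1

lemma NNReal.continuous_const_add_rpow {l : ℝ≥0} (hl : 0 < l) (y : ℝ) :
    Continuous fun x : ℝ≥0 => (l + x) ^ y :=
  continuous_iff_continuousAt.mpr fun _ =>
    (NNReal.continuousAt_rpow_const (Or.inl (by positivity))).comp (by fun_prop)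

section

variable {A : Type*} [CStarAlgebra A]

lemma CStarAlgebra.norm_sq_le_norm_mul_of_mul_star_eq {c p q : A} (h : c * star c = p * q) :
    ‖c‖ ^ 2 ≤ ‖q * p‖ := by
  nontriviality A
  have hsa : IsSelfAdjoint (p * q) := h ▸ IsSelfAdjoint.mul_star_self c
  suffices (‖c‖₊ ^ 2 : ℝ≥0∞) ≤ ‖q * p‖₊ by exact_mod_cast this
  calc (‖c‖₊ ^ 2 : ℝ≥0∞) = ‖p * q‖₊ := by
        rw [← h, CStarRing.nnnorm_self_mul_star, sq]; push_cast; rfl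
    _ = spectralRadius ℂ (q * p) := by
        rw [← spectralRadius_mul_comm, hsa.spectralRadius_eq_nnnorm]
    _ ≤ ‖q * p‖₊ := spectrum.spectralRadius_le_nnnorm _

variable [PartialOrder A] [StarOrderedRing A]

namespace CFC

lemma norm_cfc_nnreal_le {f : ℝ≥0 → ℝ≥0} {a : A} {c : ℝ} (hc : 0 ≤ c)
    (h : ∀ x ∈ spectrum ℝ≥0 a, (f x : ℝ) ≤ c) : ‖cfc f a‖ ≤ c := by
  lift c to ℝ≥0 using hc
  have key : ‖cfc f a‖₊ ≤ c := nnnorm_cfc_nnreal_le fun x hx => by exact_mod_cast h x hx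
  exact_mod_cast key

lemma algebraMap_add_eq_cfc (l : ℝ≥0) {a : A} (ha : 0 ≤ a) :
    algebraMap ℝ≥0 A l + a = cfc (fun x => l + x) a := by
  rw [cfc_add a (fun _ => l) (fun x => x), cfc_const l a, cfc_id' ℝ≥0 a]

lemma rpow_algebraMap_add {l : ℝ≥0} (hl : 0 < l) {a : A} (ha : 0 ≤ a) (y : ℝ) :
    (algebraMap ℝ≥0 A l + a) ^ y = cfc (fun x => (l + x) ^ y) a := by
  rw [rpow_def, algebraMap_add_eq_cfc l ha, ← cfc_comp' (fun x : ℝ≥0 => x ^ y) (l + ·) a]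

lemma rpow_mul_rpow_of_add_eq {a : A} (ha : IsUnit a) {x y z : ℝ} (h : x + y = z) :
    a ^ x * a ^ y = a ^ z := by
  rw [← h, rpow_add ha]

lemma norm_rpow_algebraMap_add_le {l : ℝ≥0} (hl : 0 < l) {a : A} (ha : 0 ≤ a) {y : ℝ}
    (hy : y ≤ 0) : ‖(algebraMap ℝ≥0 A l + a) ^ y‖ ≤ (l : ℝ) ^ y := by
  rw [rpow_algebraMap_add hl ha]
  refine norm_cfc_nnreal_le (by positivity) fun x _ => ?_
  rw [NNReal.coe_rpow]
  exact Real.rpow_le_rpow_of_nonpos (by positivity) (by simp) hy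

lemma norm_rpow_algebraMap_add_neg_mul_rpow_le {l : ℝ≥0} (hl : 0 < l) {a : A} (ha : 0 ≤ a)
    {s t : ℝ} (ht : 0 ≤ t) (hts : t ≤ s) :
    ‖(algebraMap ℝ≥0 A l + a) ^ (-s) * a ^ t‖ ≤ (l : ℝ) ^ (t - s) := by
  rw [rpow_algebraMap_add hl ha, rpow_def,
    ← cfc_mul _ _ a (NNReal.continuous_const_add_rpow hl _).continuousOn]
  refine norm_cfc_nnreal_le (by positivity) fun x _ => ?_
  have hlx : (0 : ℝ) < l + x := by positivity
  calc ((l + x) ^ (-s) * x ^ t : ℝ≥0) ≤ ((l + x : ℝ) ^ (-s) * (l + x : ℝ) ^ t) := by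
        push_cast
        gcongr
        simp
    _ = (l + x : ℝ) ^ (t - s) := by rw [← Real.rpow_add hlx]; ring_nf
    _ ≤ (l : ℝ) ^ (t - s) := Real.rpow_le_rpow_of_nonpos (by positivity) (by simp) (by linarith)

lemma norm_rpow_algebraMap_add_neg_mul_rpow_le_norm {l : ℝ≥0} (hl : 0 < l) {a : A}
    (ha : 0 ≤ a) {s t : ℝ} (hs : 0 < s) (hst : s ≤ t) :
    ‖(algebraMap ℝ≥0 A l + a) ^ (-s) * a ^ t‖ ≤ ‖a‖ ^ (t - s) := by
  obtain _ | _ := subsingleton_or_nontrivial A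
  · simp [Subsingleton.elim _ (0 : A), Real.rpow_nonneg]
  rw [rpow_algebraMap_add hl ha, rpow_def, ← cfc_mul _ _ a
    (NNReal.continuous_const_add_rpow hl _).continuousOn
    (NNReal.continuous_rpow_const (by linarith)).continuousOn]
  refine norm_cfc_nnreal_le (by positivity) fun x hxa => ?_
  rcases eq_or_ne x 0 with rfl | hx0
  · simp [NNReal.zero_rpow (hs.trans_le hst).ne', Real.rpow_nonneg]
  have hx : (0 : ℝ) < x := by positivity
  calc ((l + x) ^ (-s) * x ^ t : ℝ≥0) ≤ ((x : ℝ) ^ (-s) * (x : ℝ) ^ t) := by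
        push_cast
        exact mul_le_mul_of_nonneg_right
          (Real.rpow_le_rpow_of_nonpos hx (le_add_of_nonneg_left l.2) (neg_nonpos.mpr hs.le))
          (by positivity)
    _ = (x : ℝ) ^ (t - s) := by rw [← Real.rpow_add hx]; ring_nf
    _ ≤ ‖a‖ ^ (t - s) := by gcongr; exact spectrum.coe_le_norm_of_mem hxa

lemma rpow_neg_three_halves_mul_eq {a b : A} (ha : IsStrictlyPositive a)
    (hb : IsStrictlyPositive b) (x : A) :
    b ^ (-(3 / 2) : ℝ) * x =
      b ^ (-(1 / 2) : ℝ) * ((b ^ (-1 : ℝ) * a) *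
        (a ^ (-(1 / 2) : ℝ) * ((a ^ (-(1 / 2) : ℝ) * (a - b)) * (a ^ (-1 : ℝ) * x)))) +
      (b ^ (-(1 / 2) : ℝ) * a ^ (1 / 2 : ℝ)) * (a ^ (-(3 / 2) : ℝ) * x) := by
  have hb₁ : b ^ (-(1 / 2) : ℝ) * b ^ (-1 : ℝ) = b ^ (-(3 / 2) : ℝ) :=
    rpow_mul_rpow_of_add_eq hb.isUnit (by norm_num)
  have hb₂ : b ^ (-(3 / 2) : ℝ) * b = b ^ (-(1 / 2) : ℝ) := by
    nth_rw 2 [← rpow_one b hb.nonneg]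
    exact rpow_mul_rpow_of_add_eq hb.isUnit (by norm_num)
  have ha₁ : a ^ (-(1 / 2) : ℝ) * a ^ (-(1 / 2) : ℝ) = a ^ (-1 : ℝ) :=
    rpow_mul_rpow_of_add_eq ha.isUnit (by norm_num)
  have ha₂ : a ^ (1 / 2 : ℝ) * a ^ (-(3 / 2) : ℝ) = a ^ (-1 : ℝ) :=
    rpow_mul_rpow_of_add_eq ha.isUnit (by norm_num)
  have ha₃ : a * a ^ (-1 : ℝ) = 1 := by
    simpa only [rpow_one a ha.nonneg] using rpow_mul_rpow_neg (1 : ℝ) ha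
  symm
  calc _ = (b ^ (-(1 / 2) : ℝ) * b ^ (-1 : ℝ)) * (a * (a ^ (-(1 / 2) : ℝ) * a ^ (-(1 / 2) : ℝ)))
          * (a - b) * a ^ (-1 : ℝ) * x
        + b ^ (-(1 / 2) : ℝ) * (a ^ (1 / 2 : ℝ) * a ^ (-(3 / 2) : ℝ)) * x := by
        simp only [mul_assoc]
    _ = b ^ (-(3 / 2) : ℝ) * ((a - b) + b) * a ^ (-1 : ℝ) * x := by
        rw [hb₁, ha₁, ha₃, ha₂, ← hb₂]; noncomm_ring
    _ = b ^ (-(3 / 2) : ℝ) * x := by rw [sub_add_cancel, mul_assoc _ a, ha₃, mul_one]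

lemma norm_rpow_neg_half_mul_rpow_half_le {a b : A} (ha : 0 ≤ a) (hb : IsStrictlyPositive b) :
    ‖b ^ (-(1 / 2) : ℝ) * a ^ (1 / 2 : ℝ)‖ ≤ √‖a * b ^ (-1 : ℝ)‖ := by
  have hb' : b ^ (-(1 / 2) : ℝ) * b ^ (-(1 / 2) : ℝ) = b ^ (-1 : ℝ) :=
    rpow_mul_rpow_of_add_eq hb.isUnit (by norm_num)
  have ha' : a ^ (1 / 2 : ℝ) * a ^ (1 / 2 : ℝ) = a := by
    rw [← sqrt_eq_rpow, sqrt_mul_sqrt_self a ha]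
  have hc : b ^ (-(1 / 2) : ℝ) * a ^ (1 / 2 : ℝ) * star (b ^ (-(1 / 2) : ℝ) * a ^ (1 / 2 : ℝ)) =
      b ^ (-(1 / 2) : ℝ) * (a * b ^ (-(1 / 2) : ℝ)) := by
    rw [star_mul, (IsSelfAdjoint.of_nonneg rpow_nonneg).star_eq,
      (IsSelfAdjoint.of_nonneg rpow_nonneg).star_eq, mul_assoc, ← mul_assoc (a ^ _), ha']
  refine Real.le_sqrt_of_sq_le ?_
  calc _ ≤ ‖a * b ^ (-(1 / 2) : ℝ) * b ^ (-(1 / 2) : ℝ)‖ :=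
        CStarAlgebra.norm_sq_le_norm_mul_of_mul_star_eq hc
    _ = ‖a * b ^ (-1 : ℝ)‖ := by rw [mul_assoc, hb']

lemma norm_rpow_algebraMap_add_neg_three_halves_mul_rpow_le {l : ℝ≥0} (hl : 0 < l) {S T : A}
    (hS : 0 ≤ S) (hT : 0 ≤ T) {t : ℝ} (ht₁ : 1 ≤ t) (ht₂ : t ≤ 3 / 2) :
    ‖(algebraMap ℝ≥0 A l + S) ^ (-(3 / 2) : ℝ) * T ^ t‖ ≤
      (l : ℝ)⁻¹ * ‖(algebraMap ℝ≥0 A l + T) * (algebraMap ℝ≥0 A l + S) ^ (-1 : ℝ)‖ *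
        ‖(algebraMap ℝ≥0 A l + T) ^ (-(1 / 2) : ℝ) * (T - S)‖ * ‖T‖ ^ (t - 1) +
      (l : ℝ) ^ (t - 3 / 2) *
        √‖(algebraMap ℝ≥0 A l + T) * (algebraMap ℝ≥0 A l + S) ^ (-1 : ℝ)‖ := by
  set a := algebraMap ℝ≥0 A l + T
  set b := algebraMap ℝ≥0 A l + S
  have ha : IsStrictlyPositive a := (isStrictlyPositive_algebraMap hl).add_nonneg hT
  have hb : IsStrictlyPositive b := (isStrictlyPositive_algebraMap hl).add_nonneg hS
  have hab : a - b = T - S := by simp only [a, b]; abel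
  have hba : ‖b ^ (-1 : ℝ) * a‖ = ‖a * b ^ (-1 : ℝ)‖ := by
    rw [← norm_star, star_mul, ha.isSelfAdjoint.star_eq,
      (IsSelfAdjoint.of_nonneg rpow_nonneg).star_eq]
  have hb_half : ‖b ^ (-(1 / 2) : ℝ)‖ ≤ l ^ (-(1 / 2) : ℝ) :=
    norm_rpow_algebraMap_add_le hl hS (by norm_num)
  have ha_half : ‖a ^ (-(1 / 2) : ℝ)‖ ≤ l ^ (-(1 / 2) : ℝ) :=
    norm_rpow_algebraMap_add_le hl hT (by norm_num)
  have hl_inv : (l : ℝ) ^ (-(1 / 2) : ℝ) * l ^ (-(1 / 2) : ℝ) = (l : ℝ)⁻¹ := by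
    rw [← Real.rpow_add (by positivity)]; norm_num [Real.rpow_neg_one]
  rw [rpow_neg_three_halves_mul_eq ha hb, hab]
  calc _ ≤ l ^ (-(1 / 2) : ℝ) * (‖a * b ^ (-1 : ℝ)‖ * (l ^ (-(1 / 2) : ℝ) *
          (‖a ^ (-(1 / 2) : ℝ) * (T - S)‖ * ‖T‖ ^ (t - 1)))) +
        √‖a * b ^ (-1 : ℝ)‖ * l ^ (t - 3 / 2) :=
        norm_add_le_of_le (norm_mul_le_of_le hb_half (norm_mul_le_of_le hba.le
          (norm_mul_le_of_le ha_half (norm_mul_le_of_le le_rfl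
            (norm_rpow_algebraMap_add_neg_mul_rpow_le_norm hl hT one_pos ht₁)))))
          (norm_mul_le_of_le (norm_rpow_neg_half_mul_rpow_half_le ha.nonneg hb)
            (norm_rpow_algebraMap_add_neg_mul_rpow_le hl hT (by linarith) ht₂))
    _ = _ := by rw [← hl_inv]; ring

end CFC

end

/-- Let `S`, `T` be bounded self-adjoint positive semidefinite operators on a Hilbert space
with `‖T‖ ≤ κ²` (`κ ≥ 1`), `λ > 0`, and set `Ξ = ‖(λI+T)^{-1/2}(T - S)‖`,
`Ω = ‖(λI+T)(λI+S)⁻¹‖`.  Then for `3/2 ≤ r ≤ 2`,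
`‖(λI + S)^{-3/2} T^{r-1/2}‖ ≤ λ⁻¹ Ω Ξ κ^{2r-3} + λ^{r-2} Ω^{1/2}`. -/
theorem stmt_18 {H : Type*} [NormedAddCommGroup H] [InnerProductSpace ℂ H] [CompleteSpace H]
    (S T : H →L[ℂ] H) (hS : 0 ≤ S) (hT : 0 ≤ T)
    (κ : ℝ) (hκ : 1 ≤ κ) (hTnorm : ‖T‖ ≤ κ ^ 2)
    (lam : ℝ) (hlam : 0 < lam)
    (Ξ Ω : ℝ)
    (hΞ : Ξ = ‖CFC.rpow ((lam : ℂ) • (1 : H →L[ℂ] H) + T) (-(1 / 2)) * (T - S)‖)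
    (hΩ : Ω = ‖((lam : ℂ) • (1 : H →L[ℂ] H) + T) *
      CFC.rpow ((lam : ℂ) • (1 : H →L[ℂ] H) + S) (-1)‖)
    (r : ℝ) (hr1 : 3 / 2 ≤ r) (hr2 : r ≤ 2) :
    ‖CFC.rpow ((lam : ℂ) • (1 : H →L[ℂ] H) + S) (-(3 / 2)) * CFC.rpow T (r - 1 / 2)‖ ≤
      lam⁻¹ * Ω * Ξ * κ ^ (2 * r - 3) + lam ^ (r - 2) * Real.sqrt Ω := by
  lift lam to ℝ≥0 using hlam.le
  have hshift : ∀ X : H →L[ℂ] H,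
      ((lam : ℝ) : ℂ) • (1 : H →L[ℂ] H) + X = algebraMap ℝ≥0 (H →L[ℂ] H) lam + X := fun X => by
    rw [Algebra.algebraMap_eq_smul_one]; rfl
  simp only [hshift, CFC.rpow_eq_pow] at hΞ hΩ ⊢
  subst hΞ hΩ
  have hκ' : ‖T‖ ^ (r - 1 / 2 - 1) ≤ κ ^ (2 * r - 3) :=
    calc ‖T‖ ^ (r - 1 / 2 - 1) ≤ (κ ^ 2) ^ (r - 1 / 2 - 1) := by gcongr; linarith
      _ = κ ^ (2 * r - 3) := by
        rw [← Real.rpow_natCast, ← Real.rpow_mul (by linarith)]; ring_nf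
  refine (CFC.norm_rpow_algebraMap_add_neg_three_halves_mul_rpow_le (by exact_mod_cast hlam)
    hS hT (t := r - 1 / 2) (by linarith) (by linarith)).trans ?_
  rw [show r - 1 / 2 - 3 / 2 = r - 2 by ring]
  gcongr
end
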